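/- For every n ≥ 0 and all subsets I, J ⊆ [n], the entry B_n(I, J) equals (−1)^{|I ∩ J|} if both I ≫ J and n ∉ I \ J, and equals 0 otherwise. -/
import Mathlib


open Finset Polynomial
open scoped Classical

namespace AR

/-- `binVal I = r_n(I) - 1 = Σ_{i ∈ I} 2^(i-1)`. -/
def binVal (I : Finset ℕ) : ℕ := ∑ i ∈ I, 2 ^ (i - 1)

lemma binVal_Icc (m : ℕ) : binVal (Finset.Icc 1 m) = 2 ^ m - 1 := by
  induction m with
  | zero => simp [binVal]
  | succ k ih =>
      rw [binVal, Finset.sum_Icc_succ_top (by omega)]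
      rw [binVal] at ih
      rw [ih]
      have h1 : 1 ≤ 2 ^ k := Nat.one_le_two_pow
      simp only [Nat.add_sub_cancel, pow_succ]
      omega

lemma binVal_lt {n : ℕ} {I : Finset ℕ} (h : I ⊆ Finset.Icc 1 n) : binVal I < 2 ^ n := by
  have h1 : binVal I ≤ binVal (Finset.Icc 1 n) :=
    Finset.sum_le_sum_of_subset h
  have h2 := binVal_Icc n
  have h3 : 1 ≤ 2 ^ n := Nat.one_le_two_pow
  omega

/-- The row/column index (zero-based, i.e. `r_n(I) - 1`) corresponding to a subset `I ⊆ [n]`. -/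
def idx (n : ℕ) (I : Finset ℕ) (h : I ⊆ Finset.Icc 1 n) : Fin (2 ^ n) :=
  ⟨binVal I, binVal_lt h⟩

def blockEquiv (n : ℕ) : Fin (2 ^ n) ⊕ Fin (2 ^ n) ≃ Fin (2 ^ (n + 1)) :=
  finSumFinEquiv.trans (finCongr (by rw [pow_succ, mul_two]))

/-- The pair of Adin–Roichman matrices `(A_n, B_n)`, defined recursively. -/
def ABpair : (n : ℕ) → Matrix (Fin (2 ^ n)) (Fin (2 ^ n)) ℤ × Matrix (Fin (2 ^ n)) (Fin (2 ^ n)) ℤ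
  | 0 => (Matrix.of fun _ _ => 1, Matrix.of fun _ _ => 1)
  | n + 1 =>
      let p := ABpair n
      ((Matrix.reindex (blockEquiv n) (blockEquiv n)) (Matrix.fromBlocks p.1 p.1 p.1 (-p.2)),
       (Matrix.reindex (blockEquiv n) (blockEquiv n)) (Matrix.fromBlocks p.1 p.1 0 (-p.2)))

def A (n : ℕ) : Matrix (Fin (2 ^ n)) (Fin (2 ^ n)) ℤ := (ABpair n).1

def B (n : ℕ) : Matrix (Fin (2 ^ n)) (Fin (2 ^ n)) ℤ := (ABpair n).2

/-- `R` is a (nonempty) integer interval. -/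
def IsInterval (R : Finset ℕ) : Prop := ∃ a b : ℕ, R = Finset.Icc a b

/-- `R` is a run of `I`: a maximal nonempty interval contained in `I`. -/
def IsRun (I R : Finset ℕ) : Prop :=
  R.Nonempty ∧ IsInterval R ∧ R ⊆ I ∧
    ∀ S : Finset ℕ, IsInterval S → S ⊆ I → R ⊆ S → S = R

/-- `R` is a prefix of `S` : `min R = min S` and `R ⊆ S`. -/
def IsPrefixOf (R S : Finset ℕ) : Prop := R.min = S.min ∧ R ⊆ S

/-- `I ≫ J` : every run of `I ∩ J` is a prefix of a run of `I`. -/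
def Gg (I J : Finset ℕ) : Prop :=
  ∀ R : Finset ℕ, IsRun (I ∩ J) R → ∃ S : Finset ℕ, IsRun I S ∧ IsPrefixOf R S

/-- The set of runs of `I`. -/
noncomputable def runs (I : Finset ℕ) : Finset (Finset ℕ) :=
  I.powerset.filter (fun R => IsRun I R)

/-- `π(I)`: the product of (size + 1) over the runs of `I`. -/
noncomputable def piFun (I : Finset ℕ) : ℕ := ∏ R ∈ runs I, (R.card + 1)

/-- `π'_n(I)`: the product of (size + 1) over the runs of `I` not containing `n`. -/
noncomputable def piFun' (n : ℕ) (I : Finset ℕ) : ℕ :=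
  ∏ R ∈ (runs I).filter (fun R => n ∉ R), (R.card + 1)

/-- The subset of `[n]` encoded by a zero-based index `i : Fin (2^n)` (binary digits). -/
def decode (n : ℕ) (i : Fin (2 ^ n)) : Finset ℕ :=
  (Finset.Icc 1 n).filter (fun k => Nat.testBit i.val (k - 1))

/-- The matrix `U_n`, with `U_n(I,J) = 1` if `I ⊇ J` and `0` otherwise. -/
def U (n : ℕ) : Matrix (Fin (2 ^ n)) (Fin (2 ^ n)) ℤ :=
  Matrix.of fun i j => if decode n j ⊆ decode n i then 1 else 0

/-- The matrix `V_n = U_n⁻¹`, with `V_n(I,J) = (-1)^{|I \ J|}` if `I ⊇ J` and `0` otherwise. -/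
def V (n : ℕ) : Matrix (Fin (2 ^ n)) (Fin (2 ^ n)) ℤ :=
  Matrix.of fun i j =>
    if decode n j ⊆ decode n i then (-1) ^ ((decode n i) \ (decode n j)).card else 0

def A' (n : ℕ) : Matrix (Fin (2 ^ n)) (Fin (2 ^ n)) ℤ := U n * A n * V n

def B' (n : ℕ) : Matrix (Fin (2 ^ n)) (Fin (2 ^ n)) ℤ := U n * B n * V n

/-- `E ⪯ I` : `E ⊆ I`, `E` contains no minimal element of a run of `I`,
and `E` contains no two consecutive integers. -/
def SubPrec (E I : Finset ℕ) : Prop :=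
  E ⊆ I ∧ (∀ R : Finset ℕ, (h : IsRun I R) → R.min' h.1 ∉ E) ∧
    ∀ i : ℕ, ¬ (i ∈ E ∧ i + 1 ∈ E)

/-- `I ⇝ J` : `J = ([n] \ I) ∪ E` for some `E ⪯ I`. -/
def Step (n : ℕ) (I J : Finset ℕ) : Prop :=
  ∃ E : Finset ℕ, SubPrec E I ∧ J = (Finset.Icc 1 n \ I) ∪ E

/-- `π_μ` for a composition `μ` of `n`. -/
def piComp {n : ℕ} (μ : Composition n) : ℕ := (μ.blocks.map (· + 1)).prod

/-- `π'_μ` for a composition `μ` of `n`. -/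
def piComp' {n : ℕ} (μ : Composition n) : ℕ := (μ.blocks.dropLast.map (· + 1)).prod

/-- The Thue–Morse sequence: `thueMorse m = s₂(m) % 2`. -/
def thueMorse (m : ℕ) : ℕ := (Nat.digits 2 m).sum % 2

/-! ### Auxiliary development for stmt5 -/

/-- Pointwise characterization of `Gg`. -/
def Gg' (I J : Finset ℕ) : Prop := ∀ k : ℕ, k ∈ I → k + 1 ∈ I → k + 1 ∈ J → k ∈ J

lemma min_Icc_eq {a b : ℕ} (h : a ≤ b) : (Finset.Icc a b).min = (a : WithTop ℕ) := by
  have hne : (Finset.Icc a b).Nonempty := ⟨a, by simp [h]⟩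
  have h1 : (Finset.Icc a b).min' hne = a :=
    le_antisymm (Finset.min'_le _ _ (by simp [h]))
      (Finset.le_min' _ _ _ (fun x hx => (Finset.mem_Icc.1 hx).1))
  rw [← Finset.coe_min' hne, h1]; rfl

lemma isRun_Icc {X : Finset ℕ} {a b : ℕ} (hab : a ≤ b) (hsub : Finset.Icc a b ⊆ X)
    (ha1 : 1 ≤ a) (hprev : a - 1 ∉ X) (hnext : b + 1 ∉ X) : IsRun X (Finset.Icc a b) := by
  refine ⟨⟨a, by simp [hab]⟩, ⟨a, b, rfl⟩, hsub, ?_⟩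
  rintro S ⟨a', b', rfl⟩ hS hRS
  have ha' : a ∈ Finset.Icc a' b' := hRS (by simp [hab])
  have hb' : b ∈ Finset.Icc a' b' := hRS (by simp [hab])
  simp only [Finset.mem_Icc] at ha' hb'
  have h1 : a' = a := by
    by_contra h
    exact hprev (hS (by simp only [Finset.mem_Icc]; omega))
  have h2 : b' = b := by
    by_contra h
    exact hnext (hS (by simp only [Finset.mem_Icc]; omega))
  rw [h1, h2]

lemma exists_run {n : ℕ} {X : Finset ℕ} (hX : X ⊆ Finset.Icc 1 n) {a : ℕ}
    (ha : a ∈ X) (hprev : a - 1 ∉ X) :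
    ∃ b, a ≤ b ∧ Finset.Icc a b ⊆ X ∧ (b + 1) ∉ X ∧ IsRun X (Finset.Icc a b) := by
  have ha1 : 1 ≤ a := by have := hX ha; simp only [Finset.mem_Icc] at this; omega
  have hex : ∃ d, a + d + 1 ∉ X :=
    ⟨n, fun h => by have := hX h; simp only [Finset.mem_Icc] at this; omega⟩
  set d := Nat.find hex with hd
  have hnext : a + d + 1 ∉ X := Nat.find_spec hex
  have hsub : Finset.Icc a (a + d) ⊆ X := by
    intro m hm
    simp only [Finset.mem_Icc] at hm
    rcases Nat.eq_or_lt_of_le hm.1 with h | h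
    · rwa [← h]
    · have ht : m - a - 1 < d := by omega
      have h2 := Nat.find_min hex ht
      rw [not_not] at h2
      have h3 : a + (m - a - 1) + 1 = m := by omega
      rwa [h3] at h2
  exact ⟨a + d, Nat.le_add_right _ _, hsub, hnext,
    isRun_Icc (Nat.le_add_right _ _) hsub ha1 hprev hnext⟩

lemma run_endpoints {X R : Finset ℕ} (hX : ∀ x ∈ X, 1 ≤ x) (h : IsRun X R) :
    ∃ a b, a ≤ b ∧ R = Finset.Icc a b ∧ a - 1 ∉ X ∧ b + 1 ∉ X := by
  obtain ⟨hne, ⟨a, b, rfl⟩, hsub, hmax⟩ := h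
  have hab : a ≤ b := by
    obtain ⟨x, hx⟩ := hne; simp only [Finset.mem_Icc] at hx; omega
  have ha1 : 1 ≤ a := hX a (hsub (by simp [hab]))
  refine ⟨a, b, hab, rfl, ?_, ?_⟩
  · intro hcon
    have heq := hmax (Finset.Icc (a - 1) b) ⟨a - 1, b, rfl⟩ ?_ ?_
    · have : a - 1 ∈ Finset.Icc (a - 1) b := by simp only [Finset.mem_Icc]; omega
      rw [heq] at this
      simp only [Finset.mem_Icc] at this; omega
    · intro x hx
      simp only [Finset.mem_Icc] at hx
      rcases Nat.eq_or_lt_of_le hx.1 with h | h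
      · rwa [← h]
      · exact hsub (by simp only [Finset.mem_Icc]; omega)
    · intro x hx
      simp only [Finset.mem_Icc] at hx ⊢; omega
  · intro hcon
    have heq := hmax (Finset.Icc a (b + 1)) ⟨a, b + 1, rfl⟩ ?_ ?_
    · have : b + 1 ∈ Finset.Icc a (b + 1) := by simp only [Finset.mem_Icc]; omega
      rw [heq] at this
      simp only [Finset.mem_Icc] at this; omega
    · intro x hx
      simp only [Finset.mem_Icc] at hx
      rcases Nat.eq_or_lt_of_le hx.2 with h | h
      · rwa [h]
      · exact hsub (by simp only [Finset.mem_Icc]; omega)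
    · intro x hx
      simp only [Finset.mem_Icc] at hx ⊢; omega

lemma gg_iff {n : ℕ} {I J : Finset ℕ} (hI : I ⊆ Finset.Icc 1 n) : Gg I J ↔ Gg' I J := by
  have hX1 : ∀ x ∈ I, 1 ≤ x := fun x hx => by
    have := hI hx; simp only [Finset.mem_Icc] at this; omega
  constructor
  · intro hgg k hkI hk1I hk1J
    by_contra hkJ
    have hk1X : k + 1 ∈ I ∩ J := Finset.mem_inter.2 ⟨hk1I, hk1J⟩
    have hprev : (k + 1) - 1 ∉ I ∩ J := by
      simp only [Nat.add_sub_cancel, Finset.mem_inter]; tauto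
    have hXsub : I ∩ J ⊆ Finset.Icc 1 n := fun x hx => hI (Finset.mem_inter.1 hx).1
    obtain ⟨b, hab, hsub, hnext, hrun⟩ := exists_run hXsub hk1X hprev
    obtain ⟨S, hS, hpre⟩ := hgg _ hrun
    obtain ⟨a', b', ha'b', rfl, hSprev, -⟩ := run_endpoints hX1 hS
    have h1 : (Finset.Icc (k + 1) b).min = ((k + 1 : ℕ) : WithTop ℕ) := min_Icc_eq hab
    have h2 : (Finset.Icc a' b').min = ((a' : ℕ) : WithTop ℕ) := min_Icc_eq ha'b'
    have h3 : a' = k + 1 := by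
      have := hpre.1; rw [h1, h2] at this; exact_mod_cast this.symm
    apply hSprev
    rw [h3]
    simpa using hkI
  · intro hpw R hR
    have hsubIJ : R ⊆ I ∩ J := hR.2.2.1
    obtain ⟨a, b, hab, rfl, hprev, -⟩ :=
      run_endpoints (fun x hx => hX1 x (Finset.mem_inter.1 hx).1) hR
    have haX : a ∈ I ∩ J := hsubIJ (by simp [hab])
    have haI : a ∈ I := (Finset.mem_inter.1 haX).1
    have haJ : a ∈ J := (Finset.mem_inter.1 haX).2
    have ha1 : 1 ≤ a := hX1 a haI
    have hprevI : a - 1 ∉ I := by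
      intro hcon
      apply hprev
      have h1 : a - 1 + 1 = a := by omega
      have h2 : a - 1 ∈ J := hpw (a - 1) hcon (by rwa [h1]) (by rwa [h1])
      exact Finset.mem_inter.2 ⟨hcon, h2⟩
    obtain ⟨c, hac, hsubI, hnextI, hrunI⟩ := exists_run hI haI hprevI
    have hbc : b ≤ c := by
      by_contra h
      exact hnextI ((Finset.mem_inter.1 (hsubIJ (by simp only [Finset.mem_Icc]; omega))).1)
    refine ⟨Finset.Icc a c, hrunI, ?_, ?_⟩
    · rw [min_Icc_eq hab, min_Icc_eq hac]
    · intro x hx; simp only [Finset.mem_Icc] at hx ⊢; omega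
lemma gg'_caseJ {n : ℕ} {I J : Finset ℕ} (hIn : n + 1 ∉ I) :
    Gg' I J ↔ Gg' I (J.erase (n + 1)) := by
  constructor
  · intro h k h1 h2 h3
    have hk : k ≠ n + 1 := fun he => hIn (he ▸ h1)
    exact Finset.mem_erase.2 ⟨hk, h k h1 h2 (Finset.mem_of_mem_erase h3)⟩
  · intro h k h1 h2 h3
    have hk1 : k + 1 ≠ n + 1 := fun he => hIn (he ▸ h2)
    exact Finset.mem_of_mem_erase (h k h1 h2 (Finset.mem_erase.2 ⟨hk1, h3⟩))

lemma gg'_caseI {n : ℕ} {I J : Finset ℕ} (hJ : J ⊆ Finset.Icc 1 (n + 1)) (hJn : n + 1 ∉ J) :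
    Gg' I J ↔ Gg' (I.erase (n + 1)) J := by
  constructor
  · intro h k h1 h2 h3
    exact h k (Finset.mem_of_mem_erase h1) (Finset.mem_of_mem_erase h2) h3
  · intro h k h1 h2 h3
    have hk1 : k + 1 ≠ n + 1 := fun he => hJn (he ▸ h3)
    have hle : k + 1 ≤ n + 1 := by
      have := hJ h3; simp only [Finset.mem_Icc] at this; omega
    have hk : k ≠ n + 1 := by omega
    exact h k (Finset.mem_erase.2 ⟨hk, h1⟩) (Finset.mem_erase.2 ⟨hk1, h2⟩) h3

lemma gg'_caseBoth {n : ℕ} {I J : Finset ℕ} (hI : I ⊆ Finset.Icc 1 (n + 1))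
    (hJ : J ⊆ Finset.Icc 1 (n + 1)) (hIn : n + 1 ∈ I) (hJn : n + 1 ∈ J) :
    Gg' I J ↔ Gg' (I.erase (n + 1)) (J.erase (n + 1)) ∧
      n ∉ I.erase (n + 1) \ J.erase (n + 1) := by
  constructor
  · intro h
    constructor
    · intro k h1 h2 h3
      have hk : k ≠ n + 1 := (Finset.mem_erase.1 h1).1
      exact Finset.mem_erase.2 ⟨hk,
        h k (Finset.mem_of_mem_erase h1) (Finset.mem_of_mem_erase h2)
          (Finset.mem_of_mem_erase h3)⟩
    · intro hcon
      simp only [Finset.mem_sdiff, Finset.mem_erase] at hcon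
      have hnJ : n ∈ J := h n hcon.1.2 hIn hJn
      exact hcon.2 ⟨by omega, hnJ⟩
  · rintro ⟨h, hn⟩ k h1 h2 h3
    have hle : k + 1 ≤ n + 1 := by
      have := hJ h3; simp only [Finset.mem_Icc] at this; omega
    rcases Nat.eq_or_lt_of_le hle with he | hlt
    · have hk : k = n := by omega
      subst hk
      by_contra hnJ
      apply hn
      simp only [Finset.mem_sdiff, Finset.mem_erase]
      exact ⟨⟨by omega, h1⟩, fun hc => hnJ hc.2⟩
    · have hk : k ≠ n + 1 := by omega
      have hk1 : k + 1 ≠ n + 1 := by omega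
      exact Finset.mem_of_mem_erase
        (h k (Finset.mem_erase.2 ⟨hk, h1⟩) (Finset.mem_erase.2 ⟨hk1, h2⟩)
          (Finset.mem_erase.2 ⟨hk1, h3⟩))

lemma erase_subset_Icc {n : ℕ} {I : Finset ℕ} (hI : I ⊆ Finset.Icc 1 (n + 1)) :
    I.erase (n + 1) ⊆ Finset.Icc 1 n := by
  intro x hx
  have h1 := hI (Finset.mem_of_mem_erase hx)
  have h2 := (Finset.mem_erase.1 hx).1
  simp only [Finset.mem_Icc] at h1 ⊢
  omega

lemma subset_Icc_of_not_mem {n : ℕ} {I : Finset ℕ} (hI : I ⊆ Finset.Icc 1 (n + 1))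
    (h : n + 1 ∉ I) : I ⊆ Finset.Icc 1 n := by
  intro x hx
  have h1 := hI hx
  simp only [Finset.mem_Icc] at h1 ⊢
  have : x ≠ n + 1 := fun he => h (he ▸ hx)
  omega

lemma binVal_of_mem {n : ℕ} {I : Finset ℕ} (h : n + 1 ∈ I) :
    binVal I = 2 ^ n + binVal (I.erase (n + 1)) := by
  rw [binVal, binVal, ← Finset.add_sum_erase _ _ h]
  simp

lemma blockEquiv_inl (n : ℕ) (x : Fin (2 ^ n)) : ((blockEquiv n) (Sum.inl x) : ℕ) = x := rfl

lemma blockEquiv_inr (n : ℕ) (x : Fin (2 ^ n)) :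
    ((blockEquiv n) (Sum.inr x) : ℕ) = 2 ^ n + x := rfl

lemma idx_inl {n : ℕ} {I : Finset ℕ} (hI : I ⊆ Finset.Icc 1 (n + 1)) (h : n + 1 ∉ I) :
    idx (n + 1) I hI = (blockEquiv n) (Sum.inl (idx n I (subset_Icc_of_not_mem hI h))) := by
  apply Fin.ext
  rw [blockEquiv_inl]
  rfl

lemma idx_inr {n : ℕ} {I : Finset ℕ} (hI : I ⊆ Finset.Icc 1 (n + 1)) (h : n + 1 ∈ I) :
    idx (n + 1) I hI = (blockEquiv n) (Sum.inr (idx n (I.erase (n + 1)) (erase_subset_Icc hI))) := by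
  apply Fin.ext
  rw [blockEquiv_inr]
  show binVal I = 2 ^ n + binVal (I.erase (n + 1))
  exact binVal_of_mem h

lemma A_succ (n : ℕ) : A (n + 1) =
    (Matrix.reindex (blockEquiv n) (blockEquiv n))
      (Matrix.fromBlocks (A n) (A n) (A n) (-(B n))) := rfl

lemma B_succ (n : ℕ) : B (n + 1) =
    (Matrix.reindex (blockEquiv n) (blockEquiv n))
      (Matrix.fromBlocks (A n) (A n) 0 (-(B n))) := rfl
lemma keyAB (n : ℕ) : ∀ (I J : Finset ℕ) (hI : I ⊆ Finset.Icc 1 n) (hJ : J ⊆ Finset.Icc 1 n),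
    A n (idx n I hI) (idx n J hJ) = (if Gg' I J then (-1 : ℤ) ^ (I ∩ J).card else 0) ∧
    B n (idx n I hI) (idx n J hJ) =
      (if Gg' I J ∧ n ∉ I \ J then (-1 : ℤ) ^ (I ∩ J).card else 0) := by
  induction n with
  | zero =>
    intro I J hI hJ
    have hI0 : I = ∅ := Finset.subset_empty.1 (by simpa using hI)
    have hJ0 : J = ∅ := Finset.subset_empty.1 (by simpa using hJ)
    subst hI0; subst hJ0
    have hgg : Gg' (∅ : Finset ℕ) ∅ := fun k h => absurd h (Finset.notMem_empty k)
    have h0 : (0 : ℕ) ∉ (∅ : Finset ℕ) \ ∅ := by simp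
    constructor
    · show (1 : ℤ) = _
      rw [if_pos hgg]; simp
    · show (1 : ℤ) = _
      rw [if_pos ⟨hgg, h0⟩]; simp
  | succ n ih =>
    intro I J hI hJ
    by_cases hIn : n + 1 ∈ I
    · by_cases hJn : n + 1 ∈ J
      · rw [A_succ, B_succ, idx_inr hI hIn, idx_inr hJ hJn]
        simp only [Matrix.reindex_apply, Matrix.submatrix_apply, Equiv.symm_apply_apply, Matrix.fromBlocks_apply₂₂]
        obtain ⟨-, ihB⟩ := ih (I.erase (n + 1)) (J.erase (n + 1))
          (erase_subset_Icc hI) (erase_subset_Icc hJ)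
        rw [Matrix.neg_apply, ihB]
        have hcardeq : (I ∩ J).card = (I.erase (n + 1) ∩ J.erase (n + 1)).card + 1 := by
          have h1 : I.erase (n + 1) ∩ J.erase (n + 1) = (I ∩ J).erase (n + 1) := by
            ext x
            simp only [Finset.mem_erase, Finset.mem_inter]
            tauto
          rw [h1, Finset.card_erase_of_mem (Finset.mem_inter.2 ⟨hIn, hJn⟩)]
          have : 0 < (I ∩ J).card :=
            Finset.card_pos.2 ⟨n + 1, Finset.mem_inter.2 ⟨hIn, hJn⟩⟩
          omega
        have hcond := gg'_caseBoth hI hJ hIn hJn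
        have hn1 : n + 1 ∉ I \ J := by simp [Finset.mem_sdiff, hJn]
        constructor
        · by_cases h : Gg' I J
          · rw [if_pos h, if_pos (hcond.1 h), hcardeq, pow_succ]; ring
          · rw [if_neg h, if_neg (fun hc => h (hcond.2 hc)), neg_zero]
        · by_cases h : Gg' I J
          · rw [if_pos (hcond.1 h), if_pos ⟨h, hn1⟩, hcardeq, pow_succ]; ring
          · rw [if_neg (fun hc => h (hcond.2 hc)), if_neg (fun hc => h hc.1), neg_zero]
      · have hJ' := subset_Icc_of_not_mem hJ hJn
        rw [A_succ, B_succ, idx_inr hI hIn, idx_inl hJ hJn]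
        simp only [Matrix.reindex_apply, Matrix.submatrix_apply, Equiv.symm_apply_apply, Matrix.fromBlocks_apply₂₁]
        obtain ⟨ihA, -⟩ := ih (I.erase (n + 1)) J (erase_subset_Icc hI) hJ'
        have hcard : I ∩ J = I.erase (n + 1) ∩ J := by
          ext x
          simp only [Finset.mem_inter, Finset.mem_erase]
          constructor
          · rintro ⟨h1, h2⟩; exact ⟨⟨fun he => hJn (he ▸ h2), h1⟩, h2⟩
          · rintro ⟨⟨-, h1⟩, h2⟩; exact ⟨h1, h2⟩
        have hcond := gg'_caseI (I := I) hJ hJn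
        constructor
        · rw [ihA, ← hcard]
          exact if_congr hcond.symm rfl rfl
        · rw [Matrix.zero_apply, if_neg]
          rintro ⟨-, hc⟩
          exact hc (Finset.mem_sdiff.2 ⟨hIn, hJn⟩)
    · have hI' := subset_Icc_of_not_mem hI hIn
      have hn1 : n + 1 ∉ I \ J := fun h => hIn (Finset.mem_sdiff.1 h).1
      by_cases hJn : n + 1 ∈ J
      · rw [A_succ, B_succ, idx_inl hI hIn, idx_inr hJ hJn]
        simp only [Matrix.reindex_apply, Matrix.submatrix_apply, Equiv.symm_apply_apply, Matrix.fromBlocks_apply₁₂]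
        obtain ⟨ihA, -⟩ := ih I (J.erase (n + 1)) hI' (erase_subset_Icc hJ)
        have hcard : I ∩ J = I ∩ J.erase (n + 1) := by
          ext x
          simp only [Finset.mem_inter, Finset.mem_erase]
          constructor
          · rintro ⟨h1, h2⟩; exact ⟨h1, fun he => hIn (he ▸ h1), h2⟩
          · rintro ⟨h1, -, h2⟩; exact ⟨h1, h2⟩
        have hcond := gg'_caseJ (n := n) (I := I) (J := J) hIn
        constructor
        · rw [ihA, ← hcard]
          exact if_congr hcond.symm rfl rfl
        · rw [ihA, ← hcard]
          exact if_congr (hcond.symm.trans (and_iff_left hn1).symm) rfl rfl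
      · have hJ' := subset_Icc_of_not_mem hJ hJn
        rw [A_succ, B_succ, idx_inl hI hIn, idx_inl hJ hJn]
        simp only [Matrix.reindex_apply, Matrix.submatrix_apply, Equiv.symm_apply_apply, Matrix.fromBlocks_apply₁₁]
        obtain ⟨ihA, -⟩ := ih I J hI' hJ'
        refine ⟨ihA, ?_⟩
        rw [ihA]
        exact if_congr (and_iff_left hn1).symm rfl rfl

theorem stmt5 (n : ℕ) (I J : Finset ℕ) (hI : I ⊆ Finset.Icc 1 n) (hJ : J ⊆ Finset.Icc 1 n) :
    B n (idx n I hI) (idx n J hJ) =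
      if Gg I J ∧ n ∉ I \ J then (-1) ^ (I ∩ J).card else 0 := by
  rw [(keyAB n I J hI hJ).2]
  exact if_congr (and_congr_left' (gg_iff hI)).symm rfl rfl

end AR
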